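/- arXiv:math/0603411 — 2 statements merged into one kernel-verified Lean document; each statement's English description precedes it below -/
import Mathlib

section
/- For every n ≥ 1 and every centrally symmetric convex body K ⊂ ℝ^{2n}, there exists a unit vector v ∈ ℝ^{2n} such that the orthogonal projection of K onto the two-dimensional subspace E = span{v, Jv} is contained in the closed disc in E of radius 3√2·s*(K) centered at the origin, where J is the standard complex structure. -/
open MeasureTheory Metric
open scoped BigOperators

noncomputable section

/-- A convex body: compact convex set with nonempty interior. -/
def IsConvexBody {d : ℕ} (K : Set (EuclideanSpace ℝ (Fin d))) : Prop :=
  IsCompact K ∧ Convex ℝ K ∧ (interior K).Nonempty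

/-- The standard symplectic form on `ℝ^{2n}` with coordinates ordered
`(x₁, y₁, …, xₙ, yₙ)`: `ω = ∑ dxⱼ ∧ dyⱼ`. -/
def symplForm (n : ℕ) (u v : EuclideanSpace ℝ (Fin (2 * n))) : ℝ :=
  ∑ j : Fin n,
    (u ⟨2 * (j : ℕ), by have := j.isLt; omega⟩ * v ⟨2 * (j : ℕ) + 1, by have := j.isLt; omega⟩
      - u ⟨2 * (j : ℕ) + 1, by have := j.isLt; omega⟩ * v ⟨2 * (j : ℕ), by have := j.isLt; omega⟩)

/-- A linear map of `ℝ^{2n}` is symplectic if it preserves the standard symplectic form. -/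
def IsLinearSymplectic (n : ℕ)
    (S : EuclideanSpace ℝ (Fin (2 * n)) →ₗ[ℝ] EuclideanSpace ℝ (Fin (2 * n))) : Prop :=
  ∀ u v, symplForm n (S u) (S v) = symplForm n u v

/-- The `k`-th coordinate of a vector (with value `0` if `k` is out of range). -/
def coordOr {m : ℕ} (x : EuclideanSpace ℝ (Fin m)) (k : ℕ) : ℝ :=
  if h : k < m then x ⟨k, h⟩ else 0

/-- The open symplectic cylinder `Z(r) = {x : x₁² + x₂² < r²}`. -/
def symplCylinder (n : ℕ) (r : ℝ) : Set (EuclideanSpace ℝ (Fin (2 * n))) :=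
  {x | coordOr x 0 ^ 2 + coordOr x 1 ^ 2 < r ^ 2}

/-- The linear cylindrical capacity. -/
def linCylCapacity (n : ℕ) (U : Set (EuclideanSpace ℝ (Fin (2 * n)))) : ℝ :=
  sInf {c : ℝ | ∃ r : ℝ, 0 < r ∧ c = Real.pi * r ^ 2 ∧
    ∃ S : EuclideanSpace ℝ (Fin (2 * n)) →ₗ[ℝ] EuclideanSpace ℝ (Fin (2 * n)),
      IsLinearSymplectic n S ∧ S '' U ⊆ symplCylinder n r}

/-- The linear symplectic radius. -/
def linSymplRadius (n : ℕ) (U : Set (EuclideanSpace ℝ (Fin (2 * n)))) : ℝ :=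
  sSup {c : ℝ | ∃ r : ℝ, 0 < r ∧ c = Real.pi * r ^ 2 ∧
    ∃ S : EuclideanSpace ℝ (Fin (2 * n)) →ₗ[ℝ] EuclideanSpace ℝ (Fin (2 * n)),
      IsLinearSymplectic n S ∧ S '' (closedBall (0 : EuclideanSpace ℝ (Fin (2 * n))) r) ⊆ U}

/-- The standard complex structure `J` on `ℝ^{2n}`, sending
`(x₁,y₁,…,xₙ,yₙ)` to `(−y₁,x₁,…,−yₙ,xₙ)`. -/
def Jstd (n : ℕ) (x : EuclideanSpace ℝ (Fin (2 * n))) : EuclideanSpace ℝ (Fin (2 * n)) :=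
  WithLp.toLp 2 fun i => if h : (i : ℕ) % 2 = 0
    then - x ⟨(i : ℕ) + 1, by have := i.isLt; omega⟩
    else x ⟨(i : ℕ) - 1, by have := i.isLt; omega⟩

/-- The support function `x ↦ sup_{y ∈ K} ⟨x, y⟩`. -/
def suppF {d : ℕ} (K : Set (EuclideanSpace ℝ (Fin d))) (x : EuclideanSpace ℝ (Fin d)) : ℝ :=
  sSup ((fun y => (inner ℝ x y : ℝ)) '' K)

/-- The sign vector `ε ∈ {−1/√(2n), 1/√(2n)}^{2n}` associated to `ε : Fin (2n) → Bool`. -/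
def signVec (n : ℕ) (ε : Fin (2 * n) → Bool) : EuclideanSpace ℝ (Fin (2 * n)) :=
  WithLp.toLp 2 fun i => (if ε i then 1 else -1) / Real.sqrt (2 * n)

/-- The normalized Rademacher average `s*(K)`. -/
def sStar (n : ℕ) (K : Set (EuclideanSpace ℝ (Fin (2 * n)))) : ℝ :=
  (1 / 2 ^ (2 * n)) * ∑ ε : Fin (2 * n) → Bool, suppF K (signVec n ε)

/-- The rotation-invariant probability measure on the unit sphere of `ℝ^{2n}`. -/
def sphereProb (n : ℕ) : Measure (sphere (0 : EuclideanSpace ℝ (Fin (2 * n))) 1) :=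
  ((volume : Measure (EuclideanSpace ℝ (Fin (2 * n)))).toSphere Set.univ)⁻¹ •
    (volume : Measure (EuclideanSpace ℝ (Fin (2 * n)))).toSphere

/-- Half the mean width `M*(K)`. -/
def mStar (n : ℕ) (K : Set (EuclideanSpace ℝ (Fin (2 * n)))) : ℝ :=
  ∫ x : sphere (0 : EuclideanSpace ℝ (Fin (2 * n))) 1, suppF K (x : EuclideanSpace ℝ (Fin (2 * n))) ∂(sphereProb n)

/-- The sign `±1` of a boolean. -/
def radSign (b : Bool) : ℝ := if b then 1 else -1

/-- Squared `L²({−1,1}^m, μ; X_K)`-norm of `f`, with respect to the norm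
(Minkowski gauge) whose unit ball is `K` and the uniform probability measure `μ`. -/
def radL2Sq {d : ℕ} (m : ℕ) (K : Set (EuclideanSpace ℝ (Fin d)))
    (f : (Fin m → Bool) → EuclideanSpace ℝ (Fin d)) : ℝ :=
  (1 / 2 ^ m) * ∑ t : Fin m → Bool, gauge K (f t) ^ 2

/-- The Rademacher projection `R_m f = ∑ᵢ (∫ f rᵢ dμ) rᵢ`. -/
def radProj {d : ℕ} (m : ℕ) (f : (Fin m → Bool) → EuclideanSpace ℝ (Fin d)) :
    (Fin m → Bool) → EuclideanSpace ℝ (Fin d) :=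
  fun t => ∑ i : Fin m,
    radSign (t i) • ((1 / 2 ^ m : ℝ) • ∑ s : Fin m → Bool, radSign (s i) • f s)

/-- The Rademacher projection (K-convexity) constant `‖Rad‖_{X_K}` of the normed
space whose unit ball is `K`: `sup_m ‖R_m‖`. -/
def radConst {d : ℕ} (K : Set (EuclideanSpace ℝ (Fin d))) : ℝ :=
  sSup {c : ℝ | ∃ m : ℕ, ∃ f : (Fin m → Bool) → EuclideanSpace ℝ (Fin d),
    radL2Sq m K f ≤ 1 ∧ c = Real.sqrt (radL2Sq m K (radProj m f))}

/-- Volume ratio `Vol(K)/Vol(B^{2n})`. -/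
def volRatio {d : ℕ} (K : Set (EuclideanSpace ℝ (Fin d))) : ℝ :=
  (volume K).toReal / (volume (closedBall (0 : EuclideanSpace ℝ (Fin d)) 1)).toReal


/- ### Auxiliary lemmas -/

lemma aux_sum_range_two_mul (n : ℕ) (G : ℕ → ℝ) :
    ∑ i ∈ Finset.range (2*n), G i = ∑ j ∈ Finset.range n, (G (2*j) + G (2*j+1)) := by
  induction n with
  | zero => simp
  | succ m ih =>
      have : 2 * (m+1) = (2*m + 1) + 1 := by ring
      rw [this, Finset.sum_range_succ, Finset.sum_range_succ, ih, Finset.sum_range_succ]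
      ring

lemma aux_fin_pair_sum (n : ℕ) (g : Fin (2*n) → ℝ) :
    ∑ i, g i = ∑ j : Fin n,
      (g ⟨2*(j:ℕ), by have := j.isLt; omega⟩ + g ⟨2*(j:ℕ)+1, by have := j.isLt; omega⟩) := by
  set G : ℕ → ℝ := fun k => if h : k < 2*n then g ⟨k, h⟩ else 0 with hG
  have h1 : ∑ i, g i = ∑ i : Fin (2*n), G i := by
    apply Finset.sum_congr rfl
    intro i _
    simp [hG, i.isLt]
  rw [h1, Fin.sum_univ_eq_sum_range G (2*n), aux_sum_range_two_mul]
  rw [← Fin.sum_univ_eq_sum_range (fun j => G (2*j) + G (2*j+1)) n]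
  apply Finset.sum_congr rfl
  intro j _
  have h2 : 2*(j:ℕ) < 2*n := by have := j.isLt; omega
  have h3 : 2*(j:ℕ)+1 < 2*n := by have := j.isLt; omega
  simp [hG, h2, h3]

lemma aux_Jstd_even (n : ℕ) (x : EuclideanSpace ℝ (Fin (2*n))) (j : Fin n) :
    Jstd n x ⟨2*(j:ℕ), by have := j.isLt; omega⟩
      = - x ⟨2*(j:ℕ)+1, by have := j.isLt; omega⟩ := by
  have h : (2*(j:ℕ)) % 2 = 0 := Nat.mul_mod_right 2 _
  simp only [Jstd, h, dif_pos, WithLp.ofLp_toLp]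

lemma aux_Jstd_odd (n : ℕ) (x : EuclideanSpace ℝ (Fin (2*n))) (j : Fin n) :
    Jstd n x ⟨2*(j:ℕ)+1, by have := j.isLt; omega⟩
      = x ⟨2*(j:ℕ), by have := j.isLt; omega⟩ := by
  have h : ¬ ((2*(j:ℕ)+1) % 2 = 0) := by omega
  simp only [Jstd, h, dif_neg, not_false_iff, WithLp.ofLp_toLp]
  exact congrArg _ (Fin.ext (by simp))

lemma aux_inner_Jstd (n : ℕ) (x : EuclideanSpace ℝ (Fin (2*n))) :
    (inner ℝ x (Jstd n x) : ℝ) = 0 := by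
  have h : (inner ℝ x (Jstd n x) : ℝ) = ∑ i, x i * Jstd n x i := by
    simp [PiLp.inner_apply, RCLike.inner_apply, mul_comm]
  rw [h, aux_fin_pair_sum n (fun i => x i * Jstd n x i)]
  apply Finset.sum_eq_zero
  intro j _
  simp only [aux_Jstd_even n x j, aux_Jstd_odd n x j]
  ring

/-- The permutation of sign patterns induced by `Jstd`. -/
def auxSigma (n : ℕ) (ε : Fin (2*n) → Bool) : Fin (2*n) → Bool :=
  fun i => if h : (i : ℕ) % 2 = 0
    then ! ε ⟨(i:ℕ)+1, by have := i.isLt; omega⟩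
    else ε ⟨(i:ℕ)-1, by have := i.isLt; omega⟩

lemma aux_Jstd_signVec (n : ℕ) (ε : Fin (2*n) → Bool) :
    Jstd n (signVec n ε) = signVec n (auxSigma n ε) := by
  ext i
  by_cases h : (i : ℕ) % 2 = 0
  · simp only [Jstd, auxSigma, signVec, h, dif_pos, WithLp.ofLp_toLp]
    cases ε ⟨(i:ℕ)+1, by have := i.isLt; omega⟩ <;> simp <;> ring
  · simp only [Jstd, auxSigma, signVec, h, dif_neg, not_false_iff, WithLp.ofLp_toLp]

lemma aux_sigma_bijective (n : ℕ) : Function.Bijective (auxSigma n) := by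
  rw [← Finite.injective_iff_bijective]
  intro ε ε' h
  funext i
  by_cases hi : (i : ℕ) % 2 = 0
  · have hlt : (i:ℕ)+1 < 2*n := by have := i.isLt; omega
    have := congrFun h ⟨(i:ℕ)+1, hlt⟩
    have hodd : ¬ (((i:ℕ)+1) % 2 = 0) := by omega
    simp only [auxSigma, hodd, dif_neg, not_false_iff] at this
    have hfin : (⟨(i:ℕ)+1-1, by omega⟩ : Fin (2*n)) = i := by
      apply Fin.ext; simp
    rwa [hfin] at this
  · have hlt : (i:ℕ)-1 < 2*n := by have := i.isLt; omega
    have := congrFun h ⟨(i:ℕ)-1, hlt⟩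
    have heven : ((i:ℕ)-1) % 2 = 0 := by omega
    simp only [auxSigma, heven, dif_pos] at this
    have hfin : (⟨(i:ℕ)-1+1, by omega⟩ : Fin (2*n)) = i := by
      apply Fin.ext; simp; omega
    rw [hfin] at this
    exact Bool.not_inj this

lemma aux_norm_signVec (n : ℕ) (hn : 1 ≤ n) (ε : Fin (2*n) → Bool) :
    ‖signVec n ε‖ = 1 := by
  have h2n : (0:ℝ) < 2*n := by positivity
  rw [EuclideanSpace.norm_eq]
  have key : ∀ i, ‖signVec n ε i‖ ^ 2 = 1 / (2*n : ℝ) := by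
    intro i
    have hs : Real.sqrt (2*n) ^ 2 = 2*n := Real.sq_sqrt (le_of_lt h2n)
    rw [Real.norm_eq_abs, sq_abs]
    simp only [signVec, WithLp.ofLp_toLp]
    rw [div_pow, hs]
    cases ε i <;> norm_num
  rw [Finset.sum_congr rfl (fun i _ => key i), Finset.sum_const]
  simp only [Finset.card_univ, Fintype.card_fin, nsmul_eq_mul]
  push_cast
  rw [mul_one_div, div_self (by positivity), Real.sqrt_one]

lemma aux_zero_mem {n : ℕ} {K : Set (EuclideanSpace ℝ (Fin (2*n)))}
    (hK : IsConvexBody K) (hsym : K = -K) : (0 : EuclideanSpace ℝ (Fin (2*n))) ∈ K := by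
  obtain ⟨y, hy⟩ := hK.2.2
  have hyK : y ∈ K := interior_subset hy
  have hny : -y ∈ K := by rw [hsym]; exact Set.neg_mem_neg.mpr hyK
  have := hK.2.1 hyK hny (by norm_num : (0:ℝ) ≤ 1/2) (by norm_num : (0:ℝ) ≤ 1/2) (by norm_num)
  simpa [smul_neg] using this

lemma aux_bddAbove {n : ℕ} {K : Set (EuclideanSpace ℝ (Fin (2*n)))}
    (hK : IsConvexBody K) (x : EuclideanSpace ℝ (Fin (2*n))) :
    BddAbove ((fun y => (inner ℝ x y : ℝ)) '' K) :=
  (hK.1.image (continuous_const.inner continuous_id)).bddAbove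

lemma aux_suppF_nonneg {n : ℕ} {K : Set (EuclideanSpace ℝ (Fin (2*n)))}
    (hK : IsConvexBody K) (hsym : K = -K) (x : EuclideanSpace ℝ (Fin (2*n))) :
    0 ≤ suppF K x := by
  have h0 : (0 : EuclideanSpace ℝ (Fin (2*n))) ∈ K := aux_zero_mem hK hsym
  have : (0:ℝ) = inner ℝ x (0 : EuclideanSpace ℝ (Fin (2*n))) := by simp
  rw [suppF]
  exact this.le.trans (le_csSup (aux_bddAbove hK x) ⟨0, h0, rfl⟩)

lemma aux_inner_le_suppF {n : ℕ} {K : Set (EuclideanSpace ℝ (Fin (2*n)))}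
    (hK : IsConvexBody K) (hsym : K = -K) (x : EuclideanSpace ℝ (Fin (2*n)))
    {y : EuclideanSpace ℝ (Fin (2*n))} (hy : y ∈ K) :
    |(inner ℝ x y : ℝ)| ≤ suppF K x := by
  have hny : -y ∈ K := by
    rw [hsym]; exact Set.neg_mem_neg.mpr hy
  rw [abs_le]
  constructor
  · have : (inner ℝ x (-y) : ℝ) ≤ suppF K x :=
      le_csSup (aux_bddAbove hK x) ⟨-y, hny, rfl⟩
    rw [inner_neg_right] at this
    linarith
  · exact le_csSup (aux_bddAbove hK x) ⟨y, hy, rfl⟩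

lemma aux_two_le_three_sqrt_two : (2:ℝ) ≤ 3 * Real.sqrt 2 := by
  nlinarith [Real.sq_sqrt (by norm_num : (0:ℝ) ≤ 2), Real.sqrt_nonneg 2]

/-- there is a unit vector `v` such that the orthogonal projection of `K`
onto the holomorphic plane `E = span{v, Jv}` lies in the closed disc of radius
`3√2·s*(K)` in `E`. -/
theorem statement4 (n : ℕ) (hn : 1 ≤ n) (K : Set (EuclideanSpace ℝ (Fin (2 * n))))
    (hK : IsConvexBody K) (hsym : K = -K) :
    ∃ v : EuclideanSpace ℝ (Fin (2 * n)), ‖v‖ = 1 ∧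
      ∀ y ∈ K,
        ‖(Submodule.orthogonalProjectionOnto (Submodule.span ℝ {v, Jstd n v}) y :
            EuclideanSpace ℝ (Fin (2 * n)))‖ ≤ 3 * Real.sqrt 2 * sStar n K := by
  classical
  set F : (Fin (2*n) → Bool) → ℝ := fun ε => suppF K (signVec n ε) with hF
  have hcard : (Finset.univ : Finset (Fin (2*n) → Bool)).card = 2^(2*n) := by
    simp [Finset.card_univ]
  have hsum : ∑ ε : Fin (2*n) → Bool, (F ε + F (auxSigma n ε))
      ≤ ∑ ε : Fin (2*n) → Bool, (2 * sStar n K) := by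
    rw [Finset.sum_add_distrib]
    have h1 : ∑ ε, F (auxSigma n ε) = ∑ ε, F ε :=
      Fintype.sum_bijective _ (aux_sigma_bijective n) _ F (fun ε => rfl)
    rw [h1, Finset.sum_const, hcard, nsmul_eq_mul, sStar, hF]
    push_cast
    have key : ∀ S : ℝ, (2:ℝ)^(2*n) * (2 * (1/2^(2*n) * S)) = S + S := by
      intro S
      have h2 : ((2:ℝ) ^ (2*n)) ≠ 0 := by positivity
      field_simp
      ring
    rw [key]
  obtain ⟨ε, _, hε⟩ := Finset.exists_le_of_sum_le Finset.univ_nonempty hsum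
  set v : EuclideanSpace ℝ (Fin (2*n)) := signVec n ε with hvdef
  set w : EuclideanSpace ℝ (Fin (2*n)) := Jstd n v with hwdef
  have hv : ‖v‖ = 1 := aux_norm_signVec n hn ε
  have hw' : w = signVec n (auxSigma n ε) := aux_Jstd_signVec n ε
  have hw : ‖w‖ = 1 := by rw [hw']; exact aux_norm_signVec n hn _
  have hvw : (inner ℝ v w : ℝ) = 0 := aux_inner_Jstd n v
  refine ⟨v, hv, ?_⟩
  intro y hy
  set E := Submodule.span ℝ ({v, Jstd n v} : Set (EuclideanSpace ℝ (Fin (2*n)))) with hE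
  set p : EuclideanSpace ℝ (Fin (2*n)) := (Submodule.orthogonalProjectionOnto E y : EuclideanSpace ℝ (Fin (2*n))) with hp
  have hmem : p ∈ E := SetLike.coe_mem _
  obtain ⟨a, b, hab⟩ := Submodule.mem_span_pair.mp hmem
  rw [← hwdef] at hab
  have hvE : v ∈ E := Submodule.subset_span (by simp)
  have hwE : w ∈ E := Submodule.subset_span (by simp [hwdef])
  have hwv : (inner ℝ w v : ℝ) = 0 := by rw [real_inner_comm]; exact hvw
  have hvv : (inner ℝ v v : ℝ) = 1 := by rw [real_inner_self_eq_norm_sq, hv]; norm_num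
  have hww : (inner ℝ w w : ℝ) = 1 := by rw [real_inner_self_eq_norm_sq, hw]; norm_num
  have hpv : (inner ℝ p v : ℝ) = a := by
    rw [← hab]
    simp only [inner_add_left, real_inner_smul_left, hvv, hwv]
    ring
  have hpw : (inner ℝ p w : ℝ) = b := by
    rw [← hab]
    simp only [inner_add_left, real_inner_smul_left, hww, hvw]
    ring
  have hyv : (inner ℝ y v : ℝ) = a := by
    have h1 := E.starProjection_inner_eq_zero y v hvE
    rw [E.starProjection_apply, inner_sub_left, sub_eq_zero] at h1
    rw [h1, hpv]
  have hyw : (inner ℝ y w : ℝ) = b := by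
    have h1 := E.starProjection_inner_eq_zero y w hwE
    rw [E.starProjection_apply, inner_sub_left, sub_eq_zero] at h1
    rw [h1, hpw]
  have hnormp : ‖p‖^2 = a^2 + b^2 := by
    rw [← real_inner_self_eq_norm_sq, ← hab]
    simp only [inner_add_left, inner_add_right, real_inner_smul_left, real_inner_smul_right,
      hvv, hww, hvw, hwv]
    ring
  have hFa : |a| ≤ F ε := by
    rw [← hyv, real_inner_comm]
    exact aux_inner_le_suppF hK hsym v hy
  have hFb : |b| ≤ F (auxSigma n ε) := by
    rw [← hyw, real_inner_comm, hw']
    exact aux_inner_le_suppF hK hsym _ hy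
  have hple : ‖p‖ ≤ |a| + |b| := by
    have h1 : ‖p‖^2 ≤ (|a|+|b|)^2 := by
      rw [hnormp]
      have expand : (|a|+|b|)^2 = a^2 + b^2 + 2 * (|a| * |b|) := by
        rw [add_sq, sq_abs, sq_abs]; ring
      rw [expand]
      have := mul_nonneg (abs_nonneg a) (abs_nonneg b)
      linarith
    calc ‖p‖ = Real.sqrt (‖p‖^2) := (Real.sqrt_sq (norm_nonneg p)).symm
      _ ≤ Real.sqrt ((|a|+|b|)^2) := Real.sqrt_le_sqrt h1
      _ = |a| + |b| := Real.sqrt_sq (by positivity)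
  have hs0 : 0 ≤ sStar n K := by
    rw [sStar]
    apply mul_nonneg (by positivity)
    exact Finset.sum_nonneg fun ε' _ => aux_suppF_nonneg hK hsym _
  have h32 : (2:ℝ) ≤ 3 * Real.sqrt 2 := aux_two_le_three_sqrt_two
  calc ‖p‖ ≤ |a| + |b| := hple
    _ ≤ F ε + F (auxSigma n ε) := add_le_add hFa hFb
    _ ≤ 2 * sStar n K := hε
    _ ≤ 3 * Real.sqrt 2 * sStar n K := mul_le_mul_of_nonneg_right h32 hs0

end
end

section
/- For every n ≥ 1, every centrally symmetric convex body K ⊂ ℝ^{2n}, and every diagonal matrix D = diag(r₁,r₁,r₂,r₂,…,r_n,r_n) with all r_i > 0 and ∏_{i=1}^n r_i = 1, there exists a unit vector v ∈ ℝ^{2n} such that the orthogonal projection of K onto the two-dimensional subspace E = span{v, Jv} is contained in the closed disc in E of radius 6·s*(DK) centered at the origin, where J is the standard complex structure and DK is the image of K under D. -/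
open MeasureTheory Metric
open scoped BigOperators RealInnerProductSpace

noncomputable section

/-- The diagonal map `D = diag(r₁,r₁,…,rₙ,rₙ)` acting on `ℝ^{2n}`. -/
def diagPairs (n : ℕ) (d : Fin n → ℝ) (x : EuclideanSpace ℝ (Fin (2 * n))) :
    EuclideanSpace ℝ (Fin (2 * n)) :=
  WithLp.toLp 2 fun i => d ⟨(i : ℕ) / 2, by have := i.isLt; omega⟩ * x i

namespace Stmt8Aux

open Finset

variable {n : ℕ}

/-- Flip within pairs: `2k ↦ 2k+1`, `2k+1 ↦ 2k`. -/
def flipIdx (n : ℕ) (i : Fin (2 * n)) : Fin (2 * n) :=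
  if h : (i : ℕ) % 2 = 0 then ⟨(i : ℕ) + 1, by have := i.isLt; omega⟩
  else ⟨(i : ℕ) - 1, by have := i.isLt; omega⟩

lemma flipIdx_val_even (i : Fin (2 * n)) (h : (i : ℕ) % 2 = 0) :
    ((flipIdx n i : Fin (2 * n)) : ℕ) = (i : ℕ) + 1 := by simp [flipIdx, h]

lemma flipIdx_val_odd (i : Fin (2 * n)) (h : ¬ ((i : ℕ) % 2 = 0)) :
    ((flipIdx n i : Fin (2 * n)) : ℕ) = (i : ℕ) - 1 := by simp [flipIdx, h]

lemma flipIdx_parity (i : Fin (2 * n)) :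
    (((flipIdx n i : Fin (2 * n)) : ℕ) % 2 = 0) ↔ ¬ ((i : ℕ) % 2 = 0) := by
  by_cases h : (i : ℕ) % 2 = 0
  · rw [flipIdx_val_even i h]; omega
  · rw [flipIdx_val_odd i h]; have := i.isLt; omega

lemma flipIdx_flipIdx (i : Fin (2 * n)) : flipIdx n (flipIdx n i) = i := by
  by_cases h : (i : ℕ) % 2 = 0
  · have h2 : ¬ (((flipIdx n i : Fin (2 * n)) : ℕ) % 2 = 0) := by
      rw [flipIdx_val_even i h]; omega
    apply Fin.ext
    rw [flipIdx_val_odd _ h2, flipIdx_val_even i h]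
    omega
  · have h2 : (((flipIdx n i : Fin (2 * n)) : ℕ) % 2 = 0) := by
      rw [flipIdx_val_odd i h]; have := i.isLt; omega
    apply Fin.ext
    rw [flipIdx_val_even _ h2, flipIdx_val_odd i h]
    have := i.isLt; omega

lemma flipIdx_involutive : Function.Involutive (flipIdx n) := flipIdx_flipIdx

lemma Jstd_apply' (x : EuclideanSpace ℝ (Fin (2 * n))) (i : Fin (2 * n)) :
    Jstd n x i = if (i : ℕ) % 2 = 0 then -(x (flipIdx n i)) else x (flipIdx n i) := by
  by_cases h : (i : ℕ) % 2 = 0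
  · have hf : flipIdx n i = ⟨(i : ℕ) + 1, by have := i.isLt; omega⟩ := by simp [flipIdx, h]
    rw [if_pos h, hf]; simp only [Jstd, PiLp.toLp_apply, dif_pos h]
  · have hf : flipIdx n i = ⟨(i : ℕ) - 1, by have := i.isLt; omega⟩ := by simp [flipIdx, h]
    rw [if_neg h, hf]; simp only [Jstd, PiLp.toLp_apply, dif_neg h]

lemma sum_flip (f : Fin (2 * n) → ℝ) : ∑ i, f (flipIdx n i) = ∑ i, f i :=
  Equiv.sum_comp (flipIdx_involutive.toPerm) f

lemma Jstd_flip (x : EuclideanSpace ℝ (Fin (2 * n))) (i : Fin (2 * n)) :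
    Jstd n x (flipIdx n i) = if (i : ℕ) % 2 = 0 then x i else -(x i) := by
  rw [Jstd_apply', flipIdx_flipIdx]
  by_cases h : (i : ℕ) % 2 = 0
  · rw [if_neg (by rw [flipIdx_parity]; exact not_not_intro h), if_pos h]
  · rw [if_pos (by rw [flipIdx_parity]; exact h), if_neg h]

lemma inner_Jstd_self (x : EuclideanSpace ℝ (Fin (2 * n))) : ⟪x, Jstd n x⟫ = 0 := by
  have hinner : ⟪x, Jstd n x⟫ = ∑ i, x i * Jstd n x i := by
    simp [PiLp.inner_apply, RCLike.inner_apply, starRingEnd_apply, mul_comm]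
  have hneg : ∀ i : Fin (2 * n), x (flipIdx n i) * Jstd n x (flipIdx n i)
      = -(x i * Jstd n x i) := by
    intro i
    rw [Jstd_flip, Jstd_apply']
    by_cases h : (i : ℕ) % 2 = 0 <;> simp [h] <;> ring
  have hS : (∑ i, x i * Jstd n x i) = -(∑ i, x i * Jstd n x i) := by
    conv_lhs => rw [← sum_flip (fun i => x i * Jstd n x i)]
    rw [← Finset.sum_neg_distrib]
    exact Finset.sum_congr rfl fun i _ => hneg i
  rw [hinner]; linarith

lemma norm_Jstd (x : EuclideanSpace ℝ (Fin (2 * n))) : ‖Jstd n x‖ = ‖x‖ := by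
  rw [EuclideanSpace.norm_eq, EuclideanSpace.norm_eq]
  congr 1
  calc ∑ i, ‖Jstd n x i‖ ^ 2 = ∑ i, ‖Jstd n x (flipIdx n i)‖ ^ 2 :=
        (sum_flip (fun i => ‖Jstd n x i‖ ^ 2)).symm
    _ = ∑ i, ‖x i‖ ^ 2 := by
        refine Finset.sum_congr rfl fun i _ => ?_
        rw [Jstd_flip]
        by_cases h : (i : ℕ) % 2 = 0 <;> simp [h]

lemma Jstd_smul (c : ℝ) (x : EuclideanSpace ℝ (Fin (2 * n))) :
    Jstd n (c • x) = c • Jstd n x := by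
  ext i
  by_cases h : (i : ℕ) % 2 = 0 <;> simp [Jstd, h, PiLp.smul_apply, smul_eq_mul, mul_neg]

lemma d_congr (d : Fin n → ℝ) {a b : ℕ} (pa : a < n) (pb : b < n) (h : a = b) :
    d ⟨a, pa⟩ = d ⟨b, pb⟩ := by subst h; rfl

lemma Jstd_diagPairs (d : Fin n → ℝ) (x : EuclideanSpace ℝ (Fin (2 * n))) :
    Jstd n (diagPairs n d x) = diagPairs n d (Jstd n x) := by
  ext i
  by_cases h : (i : ℕ) % 2 = 0
  · simp only [Jstd, diagPairs, PiLp.toLp_apply, dif_pos h, mul_neg, neg_inj]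
    exact mul_eq_mul_right_iff.mpr (Or.inl (d_congr d _ _ (by omega)))
  · simp only [Jstd, diagPairs, PiLp.toLp_apply, dif_neg h]
    have := i.isLt
    exact mul_eq_mul_right_iff.mpr (Or.inl (d_congr d _ _ (by omega)))

lemma inner_diagPairs_swap (d : Fin n → ℝ) (x z : EuclideanSpace ℝ (Fin (2 * n))) :
    ⟪x, diagPairs n d z⟫ = ⟪diagPairs n d x, z⟫ := by
  simp only [PiLp.inner_apply, RCLike.inner_apply, starRingEnd_apply, star_trivial]
  exact Finset.sum_congr rfl fun i _ => by simp [diagPairs]; ring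

lemma diagPairs_neg (d : Fin n → ℝ) (x : EuclideanSpace ℝ (Fin (2 * n))) :
    diagPairs n d (-x) = -(diagPairs n d x) := by
  ext i; simp [diagPairs, PiLp.neg_apply, mul_neg]

lemma diagPairs_zero (d : Fin n → ℝ) :
    diagPairs n d (0 : EuclideanSpace ℝ (Fin (2 * n))) = 0 := by
  ext i; simp [diagPairs, PiLp.zero_apply]

/-- `diagPairs` as a linear map. -/
def diagLM (n : ℕ) (d : Fin n → ℝ) :
    EuclideanSpace ℝ (Fin (2 * n)) →ₗ[ℝ] EuclideanSpace ℝ (Fin (2 * n)) where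
  toFun := diagPairs n d
  map_add' x y := by ext i; simp [diagPairs, PiLp.add_apply, mul_add]
  map_smul' c x := by ext i; simp [diagPairs, PiLp.smul_apply, smul_eq_mul]; ring

lemma continuous_diagPairs (d : Fin n → ℝ) : Continuous (diagPairs n d) :=
  (diagLM n d).continuous_of_finiteDimensional

/-- The sign-flip bijection matching `Jstd` on sign vectors. -/
def sigmaB (n : ℕ) (ε : Fin (2 * n) → Bool) : Fin (2 * n) → Bool :=
  fun i => xor (ε (flipIdx n i)) (decide ((i : ℕ) % 2 = 0))

def tauB (n : ℕ) (ε : Fin (2 * n) → Bool) : Fin (2 * n) → Bool :=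
  fun i => xor (ε (flipIdx n i)) (!(decide ((i : ℕ) % 2 = 0)))

lemma tauB_sigmaB (ε : Fin (2 * n) → Bool) : tauB n (sigmaB n ε) = ε := by
  ext i
  have hp : (((flipIdx n i : Fin (2 * n)) : ℕ) % 2 = 0) ↔ ¬ ((i : ℕ) % 2 = 0) :=
    flipIdx_parity i
  by_cases h : (i : ℕ) % 2 = 0
  · have hf : ¬ (((flipIdx n i : Fin (2 * n)) : ℕ) % 2 = 0) := fun hc => (hp.mp hc) h
    simp [tauB, sigmaB, flipIdx_flipIdx, h, hf]
  · have hf : (((flipIdx n i : Fin (2 * n)) : ℕ) % 2 = 0) := hp.mpr h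
    simp [tauB, sigmaB, flipIdx_flipIdx, h, hf]

lemma sigmaB_tauB (ε : Fin (2 * n) → Bool) : sigmaB n (tauB n ε) = ε := by
  ext i
  have hp : (((flipIdx n i : Fin (2 * n)) : ℕ) % 2 = 0) ↔ ¬ ((i : ℕ) % 2 = 0) :=
    flipIdx_parity i
  by_cases h : (i : ℕ) % 2 = 0
  · have hf : ¬ (((flipIdx n i : Fin (2 * n)) : ℕ) % 2 = 0) := fun hc => (hp.mp hc) h
    simp [tauB, sigmaB, flipIdx_flipIdx, h, hf]
  · have hf : (((flipIdx n i : Fin (2 * n)) : ℕ) % 2 = 0) := hp.mpr h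
    simp [tauB, sigmaB, flipIdx_flipIdx, h, hf]

/-- `sigmaB` as an equivalence. -/
def sigmaEquiv (n : ℕ) : (Fin (2 * n) → Bool) ≃ (Fin (2 * n) → Bool) :=
  ⟨sigmaB n, tauB n, fun ε => tauB_sigmaB ε, fun ε => sigmaB_tauB ε⟩

lemma Jstd_signVec (ε : Fin (2 * n) → Bool) :
    Jstd n (signVec n ε) = signVec n (sigmaB n ε) := by
  ext i
  by_cases h : (i : ℕ) % 2 = 0
  · have hf : flipIdx n i = ⟨(i : ℕ) + 1, by have := i.isLt; omega⟩ := by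
      simp [flipIdx, h]
    have hd : decide ((i : ℕ) % 2 = 0) = true := decide_eq_true h
    simp only [Jstd, signVec, sigmaB, PiLp.toLp_apply, dif_pos h, hf, hd, Bool.xor_true]
    cases ε ⟨(i : ℕ) + 1, by have := i.isLt; omega⟩ <;>
      simp [neg_div, neg_neg]
  · have hf : flipIdx n i = ⟨(i : ℕ) - 1, by have := i.isLt; omega⟩ := by
      simp [flipIdx, h]
    have hd : decide ((i : ℕ) % 2 = 0) = false := decide_eq_false h
    simp only [Jstd, signVec, sigmaB, PiLp.toLp_apply, dif_neg h, hf, hd, Bool.xor_false]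

/-- Pairing equivalence `Fin n × Fin 2 ≃ Fin (2n)`. -/
def pairE (n : ℕ) : Fin n × Fin 2 ≃ Fin (2 * n) where
  toFun p := ⟨2 * (p.1 : ℕ) + (p.2 : ℕ), by have := p.1.isLt; have := p.2.isLt; omega⟩
  invFun i := (⟨(i : ℕ) / 2, by have := i.isLt; omega⟩, ⟨(i : ℕ) % 2, by omega⟩)
  left_inv p := by
    obtain ⟨a, b⟩ := p
    have hb := b.isLt
    refine Prod.ext ?_ ?_ <;> apply Fin.ext <;> simp <;> omega
  right_inv i := by
    apply Fin.ext; simp; omega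

lemma sum_pairs (g : Fin n → ℝ) (G : Fin (2 * n) → ℝ)
    (hG : ∀ i : Fin (2 * n), G i = g ⟨(i : ℕ) / 2, by have := i.isLt; omega⟩) :
    ∑ i, G i = 2 * ∑ k, g k := by
  rw [← Equiv.sum_comp (pairE n) G, Fintype.sum_prod_type]
  have key : ∀ (a : Fin n) (b : Fin 2), G (pairE n (a, b)) = g a := by
    intro a b
    rw [hG]
    refine d_congr g _ _ ?_
    have := b.isLt
    show (2 * (a : ℕ) + (b : ℕ)) / 2 = (a : ℕ)
    omega
  calc ∑ a : Fin n, ∑ b : Fin 2, G (pairE n (a, b))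
      = ∑ a : Fin n, ∑ _b : Fin 2, g a := by
        exact Finset.sum_congr rfl fun a _ => Finset.sum_congr rfl fun b _ => key a b
    _ = ∑ a : Fin n, 2 * g a := by
        refine Finset.sum_congr rfl fun a _ => ?_
        simp [Finset.sum_const]
    _ = 2 * ∑ k, g k := (Finset.mul_sum _ _ _).symm

lemma sum_sq_ge (d : Fin n → ℝ) (hd : ∀ i, 0 < d i) (hprod : ∏ i, d i = 1) :
    (n : ℝ) ≤ ∑ k, d k ^ 2 := by
  have h1 : ∀ k : Fin n, Real.log (d k ^ 2) ≤ d k ^ 2 - 1 := fun k =>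
    Real.log_le_sub_one_of_pos (pow_pos (hd k) 2)
  have h2 : ∑ k, Real.log (d k ^ 2) = 0 := by
    rw [← Real.log_prod (s := Finset.univ) (f := fun k => d k ^ 2) (fun k _ => (pow_pos (hd k) 2).ne'), Finset.prod_pow, hprod]
    simp
  have h3 : ∑ k, Real.log (d k ^ 2) ≤ ∑ k, (d k ^ 2 - 1) :=
    Finset.sum_le_sum fun k _ => h1 k
  rw [h2, Finset.sum_sub_distrib, Finset.sum_const, Finset.card_univ, Fintype.card_fin,
    nsmul_eq_mul, mul_one] at h3
  linarith

lemma norm_diagPairs_signVec (hn : 1 ≤ n) (d : Fin n → ℝ) (hd : ∀ i, 0 < d i)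
    (hprod : ∏ i, d i = 1) (ε : Fin (2 * n) → Bool) :
    1 ≤ ‖diagPairs n d (signVec n ε)‖ := by
  have h2n : (0 : ℝ) < 2 * n := by positivity
  rw [EuclideanSpace.norm_eq, Real.one_le_sqrt]
  have hpt : ∀ i : Fin (2 * n),
      ‖diagPairs n d (signVec n ε) i‖ ^ 2
        = (fun k : Fin n => d k ^ 2 * (1 / (2 * n))) ⟨(i : ℕ) / 2, by have := i.isLt; omega⟩ := by
    intro i
    have hsq : (signVec n ε i) ^ 2 = 1 / (2 * n) := by
      simp only [signVec, PiLp.toLp_apply]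
      rw [div_pow, Real.sq_sqrt (by positivity)]
      cases ε i <;> norm_num
    simp only [diagPairs, PiLp.toLp_apply, Real.norm_eq_abs, sq_abs, mul_pow]
    rw [hsq]
  rw [sum_pairs (fun k => d k ^ 2 * (1 / (2 * n))) _ hpt]
  have hsum := sum_sq_ge d hd hprod
  have hn' : (1 : ℝ) ≤ (n : ℝ) := by exact_mod_cast hn
  rw [← Finset.sum_mul]
  have hnn : (0 : ℝ) < n := by linarith
  rw [show (2 : ℝ) * ((∑ k, d k ^ 2) * (1 / (2 * (n : ℝ)))) = (∑ k, d k ^ 2) / n from by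
    field_simp]
  rw [le_div_iff₀ hnn]
  linarith

end Stmt8Aux

/-- for any diagonal `D = diag(r₁,r₁,…,rₙ,rₙ)` with positive entries of
product one, there is a unit vector `v` such that the orthogonal projection of `K`
onto `E = span{v, Jv}` lies in the closed disc of radius `6·s*(DK)` in `E`. -/
theorem statement8 (n : ℕ) (hn : 1 ≤ n) (K : Set (EuclideanSpace ℝ (Fin (2 * n))))
    (hK : IsConvexBody K) (hsym : K = -K)
    (d : Fin n → ℝ) (hd : ∀ i, 0 < d i) (hprod : ∏ i, d i = 1) :
    ∃ v : EuclideanSpace ℝ (Fin (2 * n)), ‖v‖ = 1 ∧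
      ∀ y ∈ K,
        ‖(Submodule.orthogonalProjection (Submodule.span ℝ {v, Jstd n v}) y :
            EuclideanSpace ℝ (Fin (2 * n)))‖ ≤ 6 * sStar n (diagPairs n d '' K) := by
  classical
  set L : Set (EuclideanSpace ℝ (Fin (2 * n))) := diagPairs n d '' K with hL
  have hcont : Continuous (diagPairs n d) := Stmt8Aux.continuous_diagPairs d
  have hLc : IsCompact L := hK.1.image hcont
  have hbdd : ∀ x : EuclideanSpace ℝ (Fin (2 * n)),
      BddAbove ((fun y => (inner ℝ x y : ℝ)) '' L) := fun x =>
    (hLc.image (Continuous.inner continuous_const continuous_id)).bddAbove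
  obtain ⟨x₀, hx₀⟩ : K.Nonempty := hK.2.2.mono interior_subset
  have hnegmem : ∀ y ∈ K, -y ∈ K := by
    intro y hy
    rw [hsym]
    simpa using Set.neg_mem_neg.mpr hy
  have h0K : (0 : EuclideanSpace ℝ (Fin (2 * n))) ∈ K := by
    have h := hK.2.1 hx₀ (hnegmem x₀ hx₀) (by norm_num : (0:ℝ) ≤ 1/2)
      (by norm_num : (0:ℝ) ≤ 1/2) (by norm_num : (1:ℝ)/2 + 1/2 = 1)
    simpa [smul_neg] using h
  have hFnn : ∀ x, 0 ≤ suppF L x := by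
    intro x
    refine le_csSup (hbdd x) ⟨diagPairs n d 0, ⟨0, h0K, rfl⟩, ?_⟩
    rw [Stmt8Aux.diagPairs_zero]
    simp
  have habs : ∀ (x : EuclideanSpace ℝ (Fin (2 * n))), ∀ y ∈ K,
      |(inner ℝ x (diagPairs n d y) : ℝ)| ≤ suppF L x := by
    intro x y hy
    have hup : (inner ℝ x (diagPairs n d y) : ℝ) ≤ suppF L x :=
      le_csSup (hbdd x) ⟨diagPairs n d y, ⟨y, hy, rfl⟩, rfl⟩
    have hlo : (inner ℝ x (diagPairs n d (-y)) : ℝ) ≤ suppF L x :=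
      le_csSup (hbdd x) ⟨diagPairs n d (-y), ⟨-y, hnegmem y hy, rfl⟩, rfl⟩
    rw [Stmt8Aux.diagPairs_neg, inner_neg_right] at hlo
    exact abs_le.2 ⟨by linarith, hup⟩
  set F : (Fin (2 * n) → Bool) → ℝ := fun ε => suppF L (signVec n ε) with hF
  have hsStar : sStar n L = (1 / 2 ^ (2 * n)) * ∑ ε : Fin (2 * n) → Bool, F ε := by
    rw [hF]
    exact rfl
  have hSigma : (∑ ε : Fin (2 * n) → Bool, F ε) = 2 ^ (2 * n) * sStar n L := by
    rw [hsStar]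
    have h2 : ((2:ℝ)) ^ (2 * n) ≠ 0 := by positivity
    field_simp
  have hsigma_sum : (∑ ε : Fin (2 * n) → Bool, F (Stmt8Aux.sigmaB n ε))
      = ∑ ε : Fin (2 * n) → Bool, F ε :=
    Equiv.sum_comp (Stmt8Aux.sigmaEquiv n) F
  have hsum_eq : (∑ ε : Fin (2 * n) → Bool, (F ε + F (Stmt8Aux.sigmaB n ε)))
      ≤ ∑ _ε : Fin (2 * n) → Bool, (2 * sStar n L) := by
    rw [Finset.sum_add_distrib, hsigma_sum, hSigma, Finset.sum_const, Finset.card_univ,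
      Fintype.card_fun, Fintype.card_bool, Fintype.card_fin, nsmul_eq_mul]
    push_cast
    ring_nf
    exact le_refl _
  obtain ⟨ε₀, -, hε₀⟩ := Finset.exists_le_of_sum_le Finset.univ_nonempty hsum_eq
  have hFnn1 : 0 ≤ F ε₀ := hFnn _
  have hFnn2 : 0 ≤ F (Stmt8Aux.sigmaB n ε₀) := hFnn _
  have hs0 : 0 ≤ sStar n L := by linarith
  -- construct the unit vector
  set s₁ : EuclideanSpace ℝ (Fin (2 * n)) := signVec n ε₀ with hs₁
  set s₂ : EuclideanSpace ℝ (Fin (2 * n)) := signVec n (Stmt8Aux.sigmaB n ε₀) with hs₂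
  set w : EuclideanSpace ℝ (Fin (2 * n)) := diagPairs n d s₁ with hw
  have hw1 : 1 ≤ ‖w‖ := Stmt8Aux.norm_diagPairs_signVec hn d hd hprod ε₀
  have hwpos : (0:ℝ) < ‖w‖ := lt_of_lt_of_le one_pos hw1
  set c : ℝ := ‖w‖⁻¹ with hc
  have hcpos : 0 < c := inv_pos.2 hwpos
  have hc1 : c ≤ 1 := inv_le_one_of_one_le₀ hw1
  set v : EuclideanSpace ℝ (Fin (2 * n)) := c • w with hv
  have hvnorm : ‖v‖ = 1 := by
    rw [hv, norm_smul, Real.norm_eq_abs, abs_of_pos hcpos, hc]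
    exact inv_mul_cancel₀ (ne_of_gt hwpos)
  refine ⟨v, hvnorm, ?_⟩
  intro y hy
  set W : EuclideanSpace ℝ (Fin (2 * n)) := Jstd n v with hWdef
  have hJw : Jstd n w = diagPairs n d s₂ := by
    rw [hw, Stmt8Aux.Jstd_diagPairs, hs₁, Stmt8Aux.Jstd_signVec, hs₂]
  have hW : W = c • (diagPairs n d s₂) := by
    rw [hWdef, hv, Stmt8Aux.Jstd_smul, hJw]
  have hWnorm : ‖W‖ = 1 := by rw [hWdef, Stmt8Aux.norm_Jstd]; exact hvnorm
  have hvW : (inner ℝ v W : ℝ) = 0 := by rw [hWdef]; exact Stmt8Aux.inner_Jstd_self v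
  have hWv : (inner ℝ W v : ℝ) = 0 := by rw [real_inner_comm]; exact hvW
  have hvv : (inner ℝ v v : ℝ) = 1 := by
    rw [real_inner_self_eq_norm_sq, hvnorm]; norm_num
  have hWW : (inner ℝ W W : ℝ) = 1 := by
    rw [real_inner_self_eq_norm_sq, hWnorm]; norm_num
  have key1 : |(inner ℝ y v : ℝ)| ≤ F ε₀ := by
    have heq : (inner ℝ y v : ℝ) = c * (inner ℝ s₁ (diagPairs n d y) : ℝ) := by
      rw [hv, real_inner_smul_right, hw]
      congr 1
      rw [Stmt8Aux.inner_diagPairs_swap]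
      exact real_inner_comm _ _
    rw [heq, abs_mul, abs_of_pos hcpos]
    have h2 := habs s₁ y hy
    calc c * |(inner ℝ s₁ (diagPairs n d y) : ℝ)|
        ≤ 1 * |(inner ℝ s₁ (diagPairs n d y) : ℝ)| :=
          mul_le_mul_of_nonneg_right hc1 (abs_nonneg _)
      _ ≤ F ε₀ := by rw [one_mul]; exact h2
  have key2 : |(inner ℝ y W : ℝ)| ≤ F (Stmt8Aux.sigmaB n ε₀) := by
    have heq : (inner ℝ y W : ℝ) = c * (inner ℝ s₂ (diagPairs n d y) : ℝ) := by
      rw [hW, real_inner_smul_right]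
      congr 1
      rw [Stmt8Aux.inner_diagPairs_swap]
      exact real_inner_comm _ _
    rw [heq, abs_mul, abs_of_pos hcpos]
    have h2 := habs s₂ y hy
    calc c * |(inner ℝ s₂ (diagPairs n d y) : ℝ)|
        ≤ 1 * |(inner ℝ s₂ (diagPairs n d y) : ℝ)| :=
          mul_le_mul_of_nonneg_right hc1 (abs_nonneg _)
      _ ≤ F (Stmt8Aux.sigmaB n ε₀) := by rw [one_mul]; exact h2
  clear_value v W
  have hvS : v ∈ Submodule.span ℝ ({v, W} : Set (EuclideanSpace ℝ (Fin (2 * n)))) :=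
    Submodule.subset_span (Set.mem_insert _ _)
  have hWS : W ∈ Submodule.span ℝ ({v, W} : Set (EuclideanSpace ℝ (Fin (2 * n)))) :=
    Submodule.subset_span (Set.mem_insert_of_mem _ rfl)
  obtain ⟨a, b, hab⟩ := Submodule.mem_span_pair.1
    (SetLike.coe_mem (Submodule.orthogonalProjection (Submodule.span ℝ {v, W}) y))
  have hyv : (inner ℝ y v : ℝ) = a := by
    have h1 : (inner ℝ (y - (Submodule.orthogonalProjection (Submodule.span ℝ {v, W}) y :
          EuclideanSpace ℝ (Fin (2 * n)))) v : ℝ) = 0 :=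
        Submodule.starProjection_inner_eq_zero (K := Submodule.span ℝ {v, W}) y v hvS
    rw [inner_sub_left] at h1
    have h2 : (inner ℝ ((Submodule.orthogonalProjection (Submodule.span ℝ {v, W}) y :
        EuclideanSpace ℝ (Fin (2 * n)))) v : ℝ) = a := by
      rw [← hab]
      simp only [inner_add_left, real_inner_smul_left, hvv, hWv]
      ring
    linarith [h1, h2, sub_eq_zero.mp h1]
  have hyW : (inner ℝ y W : ℝ) = b := by
    have h1 : (inner ℝ (y - (Submodule.orthogonalProjection (Submodule.span ℝ {v, W}) y :
          EuclideanSpace ℝ (Fin (2 * n)))) W : ℝ) = 0 :=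
        Submodule.starProjection_inner_eq_zero (K := Submodule.span ℝ {v, W}) y W hWS
    rw [inner_sub_left] at h1
    have h2 : (inner ℝ ((Submodule.orthogonalProjection (Submodule.span ℝ {v, W}) y :
        EuclideanSpace ℝ (Fin (2 * n)))) W : ℝ) = b := by
      rw [← hab]
      simp only [inner_add_left, real_inner_smul_left, hvW, hWW]
      ring
    linarith [h1, h2, sub_eq_zero.mp h1]
  have hPsq : ‖(Submodule.orthogonalProjection (Submodule.span ℝ {v, W}) y :
      EuclideanSpace ℝ (Fin (2 * n)))‖ ^ 2 = a ^ 2 + b ^ 2 := by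
    rw [← real_inner_self_eq_norm_sq, ← hab]
    simp only [inner_add_left, inner_add_right, real_inner_smul_left,
      real_inner_smul_right, hvv, hWW, hvW, hWv]
    ring
  have habs_a : |a| ≤ F ε₀ := by rw [← hyv]; exact key1
  have habs_b : |b| ≤ F (Stmt8Aux.sigmaB n ε₀) := by rw [← hyW]; exact key2
  clear_value L F s₁ s₂ w c
  obtain ⟨A, hA⟩ : ∃ A : ℝ, F ε₀ = A := ⟨_, rfl⟩
  obtain ⟨B, hB⟩ : ∃ B : ℝ, F (Stmt8Aux.sigmaB n ε₀) = B := ⟨_, rfl⟩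
  obtain ⟨S, hS⟩ : ∃ S : ℝ, sStar n L = S := ⟨_, rfl⟩
  rw [hA] at hFnn1 habs_a
  rw [hB] at hFnn2 habs_b
  rw [hA, hB, hS] at hε₀
  rw [hS] at hs0 ⊢
  have ha2 : a ^ 2 ≤ A ^ 2 := by
    rw [← sq_abs a]
    exact pow_le_pow_left₀ (abs_nonneg a) habs_a 2
  have hb2 : b ^ 2 ≤ B ^ 2 := by
    rw [← sq_abs b]
    exact pow_le_pow_left₀ (abs_nonneg b) habs_b 2
  have hab2 : a ^ 2 + b ^ 2 ≤ (6 * S) ^ 2 := by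
    nlinarith only [ha2, hb2, hFnn1, hFnn2, hε₀, hs0, mul_nonneg hFnn1 hFnn2,
      sq_nonneg (A + B), sq_nonneg S]
  have hnn := norm_nonneg (Submodule.orthogonalProjection (Submodule.span ℝ {v, W}) y :
      EuclideanSpace ℝ (Fin (2 * n)))
  have h6s : (0:ℝ) ≤ 6 * S := by linarith only [hs0]
  exact (pow_le_pow_iff_left₀ hnn h6s two_ne_zero).mp (hPsq.trans_le hab2)

end
end
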